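/- Let w := (w_n)_{n∈ℤ} be a bounded sequence of nonzero scalars in 𝕂. The bilateral weighted backward shift B_w : (x_n)_{n∈ℤ} ∈ c₀(ℤ) ↦ (w_n x_{n+1})_{n∈ℤ} ∈ c₀(ℤ) is Li-Yorke chaotic if and only if both of the following hold: (a) liminf_{n→∞} |w_{-n} ⋯ w_{-1}| = 0; and (b) sup{ |w_i ⋯ w_j| : i, j ∈ ℤ, i ≤ j } = ∞. -/

import Mathlib

open Filter Topology MeasureTheory ENNReal

noncomputable section

def LiYorkePair {M : Type*} [PseudoMetricSpace M] (g : M → M) (x y : M) : Prop :=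
  Filter.liminf (fun n : ℕ => edist (g^[n] x) (g^[n] y)) Filter.atTop = 0 ∧
  0 < Filter.limsup (fun n : ℕ => edist (g^[n] x) (g^[n] y)) Filter.atTop

def LiYorkeChaotic {M : Type*} [PseudoMetricSpace M] (g : M → M) : Prop :=
  ∃ S : Set M, ¬ S.Countable ∧ S.Pairwise (LiYorkePair g)

def DenselyLiYorkeChaotic {M : Type*} [PseudoMetricSpace M] (g : M → M) : Prop :=
  ∃ S : Set M, Dense S ∧ ¬ S.Countable ∧ S.Pairwise (LiYorkePair g)

/-!
A continuous linear operator `T` is Li–Yorke chaotic iff it has a semi-irregular vector `x`,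
i.e. `liminf ‖Tⁿ x‖ = 0 < limsup ‖Tⁿ x‖`: the difference of a Li–Yorke pair is one, and the real
multiples of one form an uncountable scrambled set.

For `B = B_w` we have `(Bⁿ x) (k - n) = w (k - n) ⋯ w (k - 1) * x k`, and `‖Bⁿ‖` is the supremum
of the products of `n` consecutive weights, so (b) says exactly that `B` is not power bounded.
If (a) fails, the backward products `w (-n) ⋯ w (-1)` are eventually bounded below, hence so is
`‖Bⁿ x‖` for every `x ≠ 0`; if (b) fails, an orbit that comes close to `0` stays close to `0`.
Conversely, if the backward products do not tend to `0`, then by (a) the orbit of `e₀` is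
semi-irregular. If they do tend to `0`, so does every finitely supported orbit; then the vectors
with `liminf ‖Bⁿ x‖ = 0` form a dense `Gδ`, and by Baire and Banach–Steinhaus one of them has an
orbit not tending to `0`, since `B` is not power bounded.
-/

theorem liminf_eq_zero_iff_frequently_lt_inv_nat {u : ℕ → ℝ≥0∞} :
    liminf u atTop = 0 ↔ ∀ k : ℕ, ∃ᶠ n in atTop, u n < (k : ℝ≥0∞)⁻¹ := by
  refine ⟨fun h k => frequently_lt_of_liminf_lt (by isBoundedDefault) ?_, fun h => ?_⟩
  · simp [h]
  · refine nonpos_iff_eq_zero.1 (ge_of_tendsto' ENNReal.tendsto_inv_nat_nhds_zero fun k => ?_)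
    exact liminf_le_of_frequently_le' ((h k).mono fun n => le_of_lt)

theorem limsup_enorm_eq_zero_iff {E : Type*} [NormedAddCommGroup E] {u : ℕ → E} :
    limsup (fun n => ‖u n‖ₑ) atTop = 0 ↔ Tendsto u atTop (𝓝 0) := by
  rw [tendsto_zero_iff_enorm_tendsto_zero]
  exact ⟨fun h => tendsto_of_le_liminf_of_limsup_le zero_le h.le, Tendsto.limsup_eq⟩

theorem isGδ_setOf_liminf_enorm_eq_zero {X E : Type*} [TopologicalSpace X]
    [NormedAddCommGroup E] {f : ℕ → X → E} (hf : ∀ n, Continuous (f n)) :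
    IsGδ {x | liminf (fun n => ‖f n x‖ₑ) atTop = 0} := by
  have hset : {x | liminf (fun n => ‖f n x‖ₑ) atTop = 0} =
      ⋂ (k : ℕ) (N : ℕ), ⋃ (n : ℕ) (_ : N ≤ n), {x | ‖f n x‖ₑ < (k : ℝ≥0∞)⁻¹} := by
    ext x
    simp [liminf_eq_zero_iff_frequently_lt_inv_nat, frequently_atTop]
  rw [hset]
  refine .iInter fun k => .iInter fun N => IsOpen.isGδ <| isOpen_biUnion fun n _ => ?_
  exact isOpen_lt (continuous_enorm.comp (hf n)) continuous_const

section SemiIrregular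

variable {𝕜 E : Type*} [NontriviallyNormedField 𝕜] [NormedAddCommGroup E] [NormedSpace 𝕜 E]

def IsSemiIrregular (T : E →L[𝕜] E) (x : E) : Prop :=
  liminf (fun n : ℕ => ‖(T ^ n) x‖ₑ) atTop = 0 ∧ 0 < limsup (fun n : ℕ => ‖(T ^ n) x‖ₑ) atTop

variable {T : E →L[𝕜] E} {x : E}

theorem liYorkePair_iff_isSemiIrregular_sub (y : E) :
    LiYorkePair T x y ↔ IsSemiIrregular T (x - y) := by
  simp only [LiYorkePair, IsSemiIrregular, ← FunLike.coe_pow_eq_iterate, edist_eq_enorm_sub,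
    map_sub]

theorem IsSemiIrregular.ne_zero (h : IsSemiIrregular T x) : x ≠ 0 := by
  rintro rfl
  simpa using h.2

theorem IsSemiIrregular.smul (h : IsSemiIrregular T x) {c : 𝕜} (hc : c ≠ 0) :
    IsSemiIrregular T (c • x) := by
  simp only [IsSemiIrregular, map_smul, enorm_smul]
  refine ⟨?_, ?_⟩
  · rw [ENNReal.liminf_const_mul_of_ne_top enorm_ne_top, h.1, mul_zero]
  · rw [ENNReal.limsup_const_mul_of_ne_top enorm_ne_top]
    exact ENNReal.mul_pos (enorm_ne_zero.2 hc) h.2.ne'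

theorem not_isSemiIrregular_of_norm_pow_le {C : ℝ} (hC : ∀ n, ‖T ^ n‖ ≤ C) (x : E) :
    ¬ IsSemiIrregular T x := by
  rintro ⟨hlim, hsup⟩
  have hstep : ∀ m, limsup (fun n : ℕ => ‖(T ^ n) x‖ₑ) atTop ≤
      ENNReal.ofReal C * ‖(T ^ m) x‖ₑ := fun m => by
    refine limsup_le_of_le (by isBoundedDefault) (eventually_atTop.2 ⟨m, fun n hn => ?_⟩)
    obtain ⟨k, rfl⟩ := Nat.exists_eq_add_of_le' hn
    rw [pow_add, ← ofReal_norm, ← ofReal_norm, ← ENNReal.ofReal_mul ((norm_nonneg _).trans (hC 0))]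
    exact ENNReal.ofReal_le_ofReal ((T ^ k).le_of_opNorm_le (hC k) ((T ^ m) x))
  have hle := le_liminf_of_le (f := atTop) (by isBoundedDefault) (Eventually.of_forall hstep)
  rw [ENNReal.liminf_const_mul_of_ne_top ofReal_ne_top, hlim, mul_zero] at hle
  exact hsup.ne' (nonpos_iff_eq_zero.1 hle)

theorem exists_isSemiIrregular_of_dense_of_unbounded [CompleteSpace E]
    (hdense : Dense {x | Tendsto (fun n => (T ^ n) x) atTop (𝓝 0)})
    (hunbdd : ¬ ∃ C, ∀ n, ‖T ^ n‖ ≤ C) : ∃ x, IsSemiIrregular T x := by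
  set A := {x | liminf (fun n => ‖(T ^ n) x‖ₑ) atTop = 0}
  have hAGδ : IsGδ A := isGδ_setOf_liminf_enorm_eq_zero fun n => (T ^ n).continuous
  have hAdense : Dense A := hdense.mono fun x hx =>
    (tendsto_zero_iff_enorm_tendsto_zero.1 hx).liminf_eq
  -- `A` and `x - A` are dense `Gδ` sets, so they meet.
  have hsplit : ∀ x, ∃ a ∈ A, x - a ∈ A := fun x =>
    hAdense.inter_of_Gδ hAGδ (hAGδ.preimage (continuous_sub_left x))
      (hAdense.preimage (isOpenMap_sub_left x)) |>.nonempty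
  by_contra hnone
  have htendsto : ∀ a ∈ A, Tendsto (fun n => (T ^ n) a) atTop (𝓝 0) := fun a ha =>
    limsup_enorm_eq_zero_iff.1 <| nonpos_iff_eq_zero.1 <| not_lt.1 fun h => hnone ⟨a, ha, h⟩
  refine hunbdd (banach_steinhaus fun x => ?_)
  obtain ⟨a, ha, hxa⟩ := hsplit x
  have hx : Tendsto (fun n => (T ^ n) x) atTop (𝓝 0) := by
    simpa using (htendsto a ha).add (htendsto _ hxa)
  obtain ⟨C, hC⟩ := isBounded_iff_forall_norm_le.1 (Metric.isBounded_range_of_tendsto _ hx)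
  exact ⟨C, fun n => hC _ ⟨n, rfl⟩⟩

end SemiIrregular

theorem liYorkeChaotic_iff_exists_isSemiIrregular {𝕜 E : Type*} [RCLike 𝕜]
    [NormedAddCommGroup E] [NormedSpace 𝕜 E] {T : E →L[𝕜] E} :
    LiYorkeChaotic T ↔ ∃ x, IsSemiIrregular T x := by
  constructor
  · rintro ⟨S, hS, hpair⟩
    obtain ⟨x, hx, y, hy, hxy⟩ := Set.Infinite.nontrivial fun hfin => hS hfin.countable
    exact ⟨x - y, (liYorkePair_iff_isSemiIrregular_sub y).1 (hpair hx hy hxy)⟩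
  · rintro ⟨z, hz⟩
    have hinj : Function.Injective fun r : ℝ => (r : 𝕜) • z :=
      (smul_left_injective 𝕜 hz.ne_zero).comp RCLike.ofReal_injective
    refine ⟨Set.range fun r : ℝ => (r : 𝕜) • z, fun hS => ?_, ?_⟩
    · exact Cardinal.not_countable_real (by simpa [Set.preimage_range] using hS.preimage hinj)
    · rintro _ ⟨r, rfl⟩ _ ⟨s, rfl⟩ hrs
      rw [liYorkePair_iff_isSemiIrregular_sub, ← sub_smul, ← RCLike.ofReal_sub]
      exact hz.smul (by simpa [sub_eq_zero] using fun h => hrs (by rw [h]))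

section IntervalProducts

open Finset

theorem prod_Ico_mul_prod_Ico {α M : Type*} [LinearOrder α] [LocallyFiniteOrder α]
    [CommMonoid M] (f : α → M) {a b c : α} (hab : a ≤ b) (hbc : b ≤ c) :
    (∏ t ∈ Ico a b, f t) * ∏ t ∈ Ico b c, f t = ∏ t ∈ Ico a c, f t := by
  rw [← prod_union (Ico_disjoint_Ico_consecutive a b c), Ico_union_Ico_eq_Ico hab hbc]

theorem exists_prod_Ico_eq_mul_prod_Ico {α G : Type*} [LinearOrder α] [LocallyFiniteOrder α]
    [CommGroupWithZero G] {w : α → G} (hw0 : ∀ t, w t ≠ 0) (p q : α) :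
    ∃ c ≠ 0, ∀ a ≤ min p q, ∏ t ∈ Ico a p, w t = c * ∏ t ∈ Ico a q, w t := by
  have hne : ∀ a b, ∏ t ∈ Ico a b, w t ≠ 0 := fun a b => prod_ne_zero_iff.2 fun t _ => hw0 t
  rcases le_total p q with hpq | hqp
  · refine ⟨(∏ t ∈ Ico p q, w t)⁻¹, inv_ne_zero (hne p q), fun a ha => ?_⟩
    rw [← prod_Ico_mul_prod_Ico w (le_min_iff.1 ha).1 hpq, mul_comm,
      mul_inv_cancel_right₀ (hne p q)]
  · refine ⟨∏ t ∈ Ico q p, w t, hne q p, fun a ha => ?_⟩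
    rw [← prod_Ico_mul_prod_Ico w (le_min_iff.1 ha).2 hqp, mul_comm]

end IntervalProducts

theorem tendsto_toNat_sub_atTop (k : ℤ) :
    Tendsto (fun n : ℕ => ((n : ℤ) - k).toNat) atTop atTop :=
  tendsto_atTop_atTop.2 fun b => ⟨b + k.natAbs, fun n hn => by omega⟩

open scoped ZeroAtInfty

namespace ZeroAtInftyContinuousMap

section Norm

variable {α β : Type*} [TopologicalSpace α] [NormedAddCommGroup β]

theorem norm_apply_le (f : C₀(α, β)) (x : α) : ‖f x‖ ≤ ‖f‖ := by
  rw [← norm_toBCF_eq_norm]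
  exact f.toBCF.norm_coe_le_norm x

theorem norm_le_iff {f : C₀(α, β)} {C : ℝ} (hC : 0 ≤ C) : ‖f‖ ≤ C ↔ ∀ x, ‖f x‖ ≤ C := by
  rw [← norm_toBCF_eq_norm]
  exact BoundedContinuousFunction.norm_le hC

end Norm

section Discrete

variable {α β : Type*} [TopologicalSpace α] [DiscreteTopology α] [NormedAddCommGroup β]

def ofFiniteSupport (f : α → β) (hf : f.support.Finite) : C₀(α, β) where
  toFun := f
  continuous_toFun := continuous_of_discreteTopology
  zero_at_infty' := by
    rw [cocompact_eq_cofinite]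
    exact tendsto_const_nhds.congr'
      (mem_of_superset hf.compl_mem_cofinite fun x hx => (Function.notMem_support.1 hx).symm)

theorem dense_setOf_support_finite : Dense {f : C₀(α, β) | (Function.support f).Finite} := by
  refine Metric.dense_iff.2 fun f r hr => ?_
  have hlarge : {x | r / 2 ≤ ‖f x‖}.Finite := by
    have hf := f.zero_at_infty'
    rw [cocompact_eq_cofinite, tendsto_zero_iff_norm_tendsto_zero] at hf
    simpa using eventually_cofinite.1 (hf.eventually (gt_mem_nhds (half_pos hr)))
  have hsupp : (Set.indicator {x | r / 2 ≤ ‖f x‖} f).support.Finite :=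
    hlarge.subset Set.support_indicator_subset
  refine ⟨ofFiniteSupport _ hsupp, ?_, hsupp⟩
  rw [Metric.mem_ball, dist_comm, dist_eq_norm]
  refine lt_of_le_of_lt ((norm_le_iff (half_pos hr).le).2 fun x => ?_) (half_lt_self hr)
  by_cases hx : r / 2 ≤ ‖f x‖
  · simpa [ofFiniteSupport, Set.indicator, hx] using (half_pos hr).le
  · simpa [ofFiniteSupport, Set.indicator, hx] using (not_le.1 hx).le

variable [DecidableEq α]

def single (a : α) (b : β) : C₀(α, β) :=
  ofFiniteSupport (Pi.single a b) ((Set.finite_singleton a).subset Pi.support_single_subset)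

@[simp]
theorem single_apply (a : α) (b : β) (x : α) : single a b x = (Pi.single a b : α → β) x :=
  rfl

theorem norm_single (a : α) (b : β) : ‖single a b‖ = ‖b‖ := by
  refine le_antisymm ((norm_le_iff (norm_nonneg b)).2 fun x => ?_) ?_
  · rcases eq_or_ne x a with rfl | hx <;> simp [*]
  · simpa using norm_apply_le (single a b) a

end Discrete

end ZeroAtInftyContinuousMap

section WeightedShift

open Finset ZeroAtInftyContinuousMap

variable {𝕂 : Type*} [NontriviallyNormedField 𝕂] {w : ℤ → 𝕂} {C : ℝ}

def weightedShift (w : ℤ → 𝕂) (hC : ∀ n, ‖w n‖ ≤ C) : C₀(ℤ, 𝕂) →L[𝕂] C₀(ℤ, 𝕂) :=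
  LinearMap.mkContinuous
    { toFun := fun x =>
        { toFun := fun n => w n * x (n + 1)
          continuous_toFun := continuous_of_discreteTopology
          zero_at_infty' := by
            have hx := x.zero_at_infty'
            rw [cocompact_eq_cofinite] at hx ⊢
            have hx1 := tendsto_zero_iff_norm_tendsto_zero.1
              (hx.comp (add_left_injective (1 : ℤ)).tendsto_cofinite)
            refine squeeze_zero_norm (fun n => ?_) (by simpa using hx1.const_mul C)
            rw [norm_mul]
            exact mul_le_mul_of_nonneg_right (hC n) (norm_nonneg _) }
      map_add' := fun x y => by ext n; simp [mul_add]
      map_smul' := fun c x => by ext n; simp [mul_left_comm] }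
    C fun x => by
      have hC0 : 0 ≤ C := (norm_nonneg _).trans (hC 0)
      refine (norm_le_iff (by positivity)).2 fun n => ?_
      change ‖w n * x (n + 1)‖ ≤ C * ‖x‖
      rw [norm_mul]
      exact mul_le_mul (hC n) (norm_apply_le x _) (norm_nonneg _) hC0

variable {hC : ∀ n, ‖w n‖ ≤ C}

@[simp]
theorem weightedShift_apply (x : C₀(ℤ, 𝕂)) (n : ℤ) : weightedShift w hC x n = w n * x (n + 1) :=
  rfl

theorem weightedShift_pow_apply (n : ℕ) (x : C₀(ℤ, 𝕂)) (k : ℤ) :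
    (weightedShift w hC ^ n) x k = (∏ t ∈ Ico k (k + n), w t) * x (k + n) := by
  induction n generalizing x with
  | zero => simp
  | succ n ih =>
    rw [pow_succ, mul_apply_eq_comp, ih, weightedShift_apply, Nat.cast_succ, ← add_assoc,
      ← insert_Ico_right_eq_Ico_add_one (by omega), prod_insert right_notMem_Ico]
    ring

theorem norm_weightedShift_pow_single (k : ℤ) (n : ℕ) :
    ‖(weightedShift w hC ^ n) (single k 1)‖ = ‖∏ t ∈ Ico (k - n) k, w t‖ := by
  refine le_antisymm ((norm_le_iff (norm_nonneg _)).2 fun m => ?_) ?_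
  · rw [weightedShift_pow_apply, single_apply]
    rcases eq_or_ne (m + n) k with rfl | hm
    · simp
    · rw [Pi.single_eq_of_ne hm, mul_zero, norm_zero]
      exact norm_nonneg _
  · calc ‖∏ t ∈ Ico (k - n) k, w t‖
        = ‖(weightedShift w hC ^ n) (single k 1) (k - n)‖ := by
          rw [weightedShift_pow_apply, sub_add_cancel, single_apply, Pi.single_eq_same, mul_one]
      _ ≤ _ := norm_apply_le _ _

theorem norm_prod_Ico_le_norm_weightedShift_pow (k : ℤ) (n : ℕ) :
    ‖∏ t ∈ Ico k (k + n), w t‖ ≤ ‖weightedShift w hC ^ n‖ :=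
  calc ‖∏ t ∈ Ico k (k + n), w t‖ = ‖(weightedShift w hC ^ n) (single (k + n) 1)‖ := by
        rw [norm_weightedShift_pow_single, add_sub_cancel_right]
    _ ≤ ‖weightedShift w hC ^ n‖ * ‖single (k + n) (1 : 𝕂)‖ := ContinuousLinearMap.le_opNorm _ _
    _ = ‖weightedShift w hC ^ n‖ := by rw [norm_single, norm_one, mul_one]

theorem norm_weightedShift_pow_le {n : ℕ} {D : ℝ}
    (hD : ∀ k : ℤ, ‖∏ t ∈ Ico k (k + n), w t‖ ≤ D) : ‖weightedShift w hC ^ n‖ ≤ D := by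
  have hD0 : 0 ≤ D := (norm_nonneg _).trans (hD 0)
  refine ContinuousLinearMap.opNorm_le_bound _ hD0 fun x =>
    (norm_le_iff (by positivity)).2 fun k => ?_
  rw [weightedShift_pow_apply, norm_mul]
  exact mul_le_mul (hD k) (norm_apply_le x _) (norm_nonneg _) hD0

theorem iSup_enorm_prod_Icc_eq_top_iff :
    (⨆ (i : ℤ) (j : ℤ) (_ : i ≤ j), ‖∏ t ∈ Icc i j, w t‖ₑ) = ⊤ ↔
      ¬ ∃ D, ∀ n, ‖weightedShift w hC ^ n‖ ≤ D := by
  set S := ⨆ (i : ℤ) (j : ℤ) (_ : i ≤ j), ‖∏ t ∈ Icc i j, w t‖ₑ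
  constructor
  · rintro hS ⟨D, hD⟩
    have hSD : S ≤ ENNReal.ofReal D := iSup_le fun i => iSup_le fun j => iSup_le fun hij => by
      rw [← ofReal_norm, ← Ico_add_one_right_eq_Icc, show j + 1 = i + (j + 1 - i).toNat by omega]
      exact ENNReal.ofReal_le_ofReal ((norm_prod_Ico_le_norm_weightedShift_pow i _).trans (hD _))
    exact ENNReal.ofReal_ne_top (top_le_iff.1 (hS ▸ hSD))
  · intro hunbdd
    by_contra hS
    refine hunbdd ⟨max S.toReal 1, fun n => norm_weightedShift_pow_le fun k => ?_⟩
    rcases Nat.eq_zero_or_pos n with rfl | hn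
    · simp
    · refine le_max_of_le_left ?_
      rw [← Icc_sub_one_right_eq_Ico, ← toReal_enorm]
      exact ENNReal.toReal_mono hS (le_iSup_of_le k (le_iSup₂_of_le (k + n - 1) (by omega) le_rfl))

theorem exists_eventually_prod_Ico_sub_eq (hw0 : ∀ n, w n ≠ 0) (k : ℤ) :
    ∃ c ≠ 0, ∀ᶠ n : ℕ in atTop,
      ∏ t ∈ Ico (k - n) k, w t = c * ∏ t ∈ Ico (-(((n : ℤ) - k).toNat : ℤ)) 0, w t := by
  obtain ⟨c, hc, hceq⟩ := exists_prod_Ico_eq_mul_prod_Ico hw0 k 0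
  refine ⟨c, hc, (eventually_ge_atTop k.toNat).mono fun n hn => ?_⟩
  rw [show -(((n : ℤ) - k).toNat : ℤ) = k - n by omega]
  exact hceq _ (by omega)

theorem eq_zero_of_liminf_enorm_weightedShift_pow_apply_eq_zero (hw0 : ∀ n, w n ≠ 0)
    (hb : 0 < liminf (fun n : ℕ => ‖∏ t ∈ Ico (-(n : ℤ)) 0, w t‖ₑ) atTop)
    {x : C₀(ℤ, 𝕂)} (hx : liminf (fun n : ℕ => ‖(weightedShift w hC ^ n) x‖ₑ) atTop = 0) :
    x = 0 := by
  ext k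
  by_contra hxk
  obtain ⟨c₀, hc₀, hc₀b⟩ := exists_between hb
  obtain ⟨c, hc, hceq⟩ := exists_eventually_prod_Ico_sub_eq hw0 k
  have hlow : ∀ᶠ n : ℕ in atTop, ‖c‖ₑ * c₀ * ‖x k‖ₑ ≤ ‖(weightedShift w hC ^ n) x‖ₑ := by
    filter_upwards [hceq, (tendsto_toNat_sub_atTop k).eventually (eventually_lt_of_lt_liminf hc₀b)]
      with n hn hlt
    calc ‖c‖ₑ * c₀ * ‖x k‖ₑ
        ≤ ‖c‖ₑ * ‖∏ t ∈ Ico (-(((n : ℤ) - k).toNat : ℤ)) 0, w t‖ₑ * ‖x k‖ₑ := by gcongr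
      _ = ‖(weightedShift w hC ^ n) x (k - n)‖ₑ := by
          rw [weightedShift_pow_apply, sub_add_cancel, hn, enorm_mul, enorm_mul]
      _ ≤ ‖(weightedShift w hC ^ n) x‖ₑ := enorm_le_iff_norm_le.2 (norm_apply_le _ _)
  have hle := le_liminf_of_le (by isBoundedDefault) hlow
  rw [hx, nonpos_iff_eq_zero] at hle
  exact mul_ne_zero (mul_ne_zero (enorm_ne_zero.2 hc) hc₀.ne') (enorm_ne_zero.2 hxk) hle

theorem dense_setOf_tendsto_weightedShift_pow_apply (hw0 : ∀ n, w n ≠ 0)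
    (hb : Tendsto (fun n : ℕ => ∏ t ∈ Ico (-(n : ℤ)) 0, w t) atTop (𝓝 0)) :
    Dense {x : C₀(ℤ, 𝕂) | Tendsto (fun n => (weightedShift w hC ^ n) x) atTop (𝓝 0)} := by
  refine dense_setOf_support_finite.mono fun x (hx : (Function.support x).Finite) => ?_
  have hcoord : ∀ k : ℤ,
      Tendsto (fun n : ℕ => ‖∏ t ∈ Ico (k - n) k, w t‖ * ‖x k‖) atTop (𝓝 0) := fun k => by
    obtain ⟨c, -, hceq⟩ := exists_eventually_prod_Ico_sub_eq hw0 k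
    have hk := ((hb.comp (tendsto_toNat_sub_atTop k)).const_mul c).congr'
      (hceq.mono fun n hn => hn.symm)
    rw [mul_zero] at hk
    simpa using (tendsto_zero_iff_norm_tendsto_zero.1 hk).mul_const ‖x k‖
  refine squeeze_zero_norm (fun n => ?_)
    (by simpa using tendsto_finsetSum hx.toFinset fun k _ => hcoord k)
  refine (norm_le_iff (sum_nonneg fun _ _ => by positivity)).2 fun m => ?_
  rw [weightedShift_pow_apply, norm_mul]
  by_cases hm : m + n ∈ Function.support x
  · simpa using single_le_sum (f := fun k : ℤ => ‖∏ t ∈ Ico (k - n) k, w t‖ * ‖x k‖)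
      (fun _ _ => by positivity) (hx.mem_toFinset.2 hm)
  · rw [Function.notMem_support.1 hm, norm_zero, mul_zero]
    exact sum_nonneg fun _ _ => by positivity

theorem isSemiIrregular_weightedShift_single_zero
    (ha : liminf (fun n : ℕ => ‖∏ t ∈ Ico (-(n : ℤ)) 0, w t‖ₑ) atTop = 0)
    (hb : ¬ Tendsto (fun n : ℕ => ∏ t ∈ Ico (-(n : ℤ)) 0, w t) atTop (𝓝 0)) :
    IsSemiIrregular (weightedShift w hC) (single (0 : ℤ) (1 : 𝕂)) := by
  have horbit : ∀ n : ℕ, ‖(weightedShift w hC ^ n) (single 0 1)‖ₑ =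
      ‖∏ t ∈ Ico (-(n : ℤ)) 0, w t‖ₑ := fun n => by
    rw [← ofReal_norm, ← ofReal_norm, norm_weightedShift_pow_single, zero_sub]
  simp only [IsSemiIrregular, horbit]
  exact ⟨ha, pos_iff_ne_zero.2 (mt limsup_enorm_eq_zero_iff.1 hb)⟩

end WeightedShift

theorem bilateral_shift_c0_liYorke_iff
    {𝕂 : Type} [RCLike 𝕂] (w : ℤ → 𝕂) (hwb : ∃ C : ℝ, ∀ n, ‖w n‖ ≤ C)
    (hw0 : ∀ n, w n ≠ 0)
    (T : ZeroAtInftyContinuousMap ℤ 𝕂 → ZeroAtInftyContinuousMap ℤ 𝕂)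
    (hT : ∀ x n, T x n = w n * x (n + 1)) :
    LiYorkeChaotic T ↔
      (Filter.liminf
          (fun n : ℕ => (‖∏ t ∈ Finset.Icc (-(n : ℤ)) (-1), w t‖₊ : ℝ≥0∞))
          Filter.atTop = 0 ∧
        (⨆ (i : ℤ) (j : ℤ) (_ : i ≤ j), (‖∏ t ∈ Finset.Icc i j, w t‖₊ : ℝ≥0∞)) = ⊤) := by
  obtain ⟨C, hC⟩ := hwb
  obtain rfl : T = weightedShift w hC := funext fun x => ZeroAtInftyContinuousMap.ext (hT x)
  have hIcc : ∀ n : ℕ, Finset.Icc (-(n : ℤ)) (-1) = Finset.Ico (-(n : ℤ)) 0 := fun n => by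
    simpa using Finset.Icc_sub_one_right_eq_Ico (-(n : ℤ)) 0
  simp only [← enorm_eq_nnnorm, hIcc, iSup_enorm_prod_Icc_eq_top_iff (hC := hC),
    liYorkeChaotic_iff_exists_isSemiIrregular]
  constructor
  · rintro ⟨x, hx⟩
    refine ⟨by_contra fun ha => hx.ne_zero ?_,
      fun ⟨D, hD⟩ => not_isSemiIrregular_of_norm_pow_le hD x hx⟩
    exact eq_zero_of_liminf_enorm_weightedShift_pow_apply_eq_zero hw0 (pos_iff_ne_zero.2 ha) hx.1
  · rintro ⟨ha, hunbdd⟩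
    by_cases hb : Tendsto (fun n : ℕ => ∏ t ∈ Finset.Ico (-(n : ℤ)) 0, w t) atTop (𝓝 0)
    · exact exists_isSemiIrregular_of_dense_of_unbounded
        (dense_setOf_tendsto_weightedShift_pow_apply hw0 hb) hunbdd
    · exact ⟨_, isSemiIrregular_weightedShift_single_zero ha hb⟩
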